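/- Let Δ : ℝ³ × ℝ → ℝ³ be smooth of the form Δ(μ, ε) = τ(μ) + ε·φ(μ), where τ₁ = τ₂ =: τ̂. Suppose η ∈ ℝ³ satisfies τ(η) = 0, the gradients ∇τ̂(η), ∇τ₃(η) are linearly independent, and along a regular curve Γ parametrizing the zero set of τ with Γ(0) = η, the function s ↦ φ₂(Γ(s)) − φ₁(Γ(s)) has a simple zero at s = 0 (i.e. it vanishes at 0 with nonvanishing derivative). Then there exists ε₀ > 0 and a continuous curve ε ↦ Υ(ε) defined for |ε| < ε₀ with Υ(0) = η, Δ(Υ(ε), ε) = 0 for all such ε, and for each ε ≠ 0 with |ε| < ε₀ the derivative D_μΔ(Υ(ε), ε) is invertible. -/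

import Mathlib

noncomputable section ZSLAux

abbrev ZSL.E3 := Fin 3 → ℝ
open ZSL

lemma ZSL.hasF_comp (f : E3 → E3) (hf : ContDiff ℝ (⊤ : ℕ∞) f) (i : Fin 3) (x : E3) :
    HasFDerivAt (fun μ => f μ i) (fderiv ℝ (fun μ => f μ i) x) x := by
  have h := (ContinuousLinearMap.proj (R := ℝ) (φ := fun _ : Fin 3 => ℝ) i).hasFDerivAt.comp x
    (hf.differentiable (by simp) x).hasFDerivAt
  have : fderiv ℝ (fun μ => f μ i) x
      = (ContinuousLinearMap.proj i).comp (fderiv ℝ f x) := h.fderiv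
  rw [this]; exact h

lemma ZSL.comp_fderiv_apply (f : E3 → E3) (hf : ContDiff ℝ (⊤ : ℕ∞) f) (x v : E3) (i : Fin 3) :
    fderiv ℝ (fun μ => f μ i) x v = fderiv ℝ f x v i := by
  have h := ((ContinuousLinearMap.proj (R := ℝ) (φ := fun _ : Fin 3 => ℝ) i).hasFDerivAt.comp x
    (hf.differentiable (by simp) x).hasFDerivAt).fderiv
  rw [show (fun μ => f μ i) = (⇑(ContinuousLinearMap.proj (R := ℝ) (φ := fun _ : Fin 3 => ℝ) i) ∘ f)
    from rfl, h]
  rfl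

lemma ZSL.cont_fderiv_apply (f : E3 → E3) (hf : ContDiff ℝ (⊤ : ℕ∞) f) (v : E3) (i : Fin 3) :
    Continuous (fun x => fderiv ℝ f x v i) := by
  apply (continuous_apply i).comp
  exact (ContinuousLinearMap.apply ℝ E3 v).continuous.comp (hf.continuous_fderiv (by simp))

lemma ZSL.fderiv_expand (f : E3 → E3) (x v : E3) :
    fderiv ℝ f x v = ∑ j, v j • fderiv ℝ f x (Pi.single j 1) := by
  conv_lhs => rw [← Finset.univ_sum_single v]
  rw [map_sum]
  refine Finset.sum_congr rfl fun j _ => ?_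
  rw [← (fderiv ℝ f x).map_smul]
  congr 1
  rw [← Pi.single_smul, smul_eq_mul, mul_one]

lemma ZSL.grad_expand (f : E3 → E3) (x v : E3) (i : Fin 3) :
    fderiv ℝ f x v i = ∑ j, fderiv ℝ f x (Pi.single j 1) i * v j := by
  rw [fderiv_expand]
  rw [Finset.sum_apply]
  refine Finset.sum_congr rfl fun j _ => ?_
  simp [mul_comm]

lemma ZSL.hasF (f g : E3 → E3) (hf : ContDiff ℝ (⊤ : ℕ∞) f) (hg : ContDiff ℝ (⊤ : ℕ∞) g) (i : Fin 3)
    (x : E3) (e : ℝ) :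
    HasFDerivAt (fun p : E3 × ℝ => f p.1 i + p.2 * g p.1 i)
      (((fderiv ℝ (fun μ => f μ i) x).comp (ContinuousLinearMap.fst ℝ E3 ℝ)) +
        (e • ((fderiv ℝ (fun μ => g μ i) x).comp (ContinuousLinearMap.fst ℝ E3 ℝ)) +
          (g x i) • ContinuousLinearMap.snd ℝ E3 ℝ)) (x, e) := by
  have h1 : HasFDerivAt (fun p : E3 × ℝ => f p.1 i)
      ((fderiv ℝ (fun μ => f μ i) x).comp (ContinuousLinearMap.fst ℝ E3 ℝ)) (x, e) :=
    by have := (hasF_comp f hf i x).comp (x, e) (hasFDerivAt_fst (𝕜 := ℝ) (p := (x, e))); exact this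
  have h2 : HasFDerivAt (fun p : E3 × ℝ => g p.1 i)
      ((fderiv ℝ (fun μ => g μ i) x).comp (ContinuousLinearMap.fst ℝ E3 ℝ)) (x, e) :=
    by have := (hasF_comp g hg i x).comp (x, e) (hasFDerivAt_fst (𝕜 := ℝ) (p := (x, e))); exact this
  exact h1.add (hasFDerivAt_snd.mul h2)

end ZSLAux

set_option maxHeartbeats 1000000 in
theorem stmt_7 (τ φ : (Fin 3 → ℝ) → (Fin 3 → ℝ))
    (hτ : ContDiff ℝ (⊤ : ℕ∞) τ) (hφ : ContDiff ℝ (⊤ : ℕ∞) φ)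
    (hsym : ∀ μ, τ μ 0 = τ μ 1)
    (η : Fin 3 → ℝ) (hη : τ η = 0)
    (hind : LinearIndependent ℝ
      ![fderiv ℝ (fun μ => τ μ 0) η, fderiv ℝ (fun μ => τ μ 2) η])
    (Γ : ℝ → (Fin 3 → ℝ)) (hΓ : ContDiff ℝ 1 Γ)
    (hΓ0 : Γ 0 = η) (hΓ' : deriv Γ 0 ≠ 0)
    (hΓz : ∀ s, τ (Γ s) = 0)
    (hsimple : (fun s => φ (Γ s) 1 - φ (Γ s) 0) 0 = 0 ∧
      deriv (fun s => φ (Γ s) 1 - φ (Γ s) 0) 0 ≠ 0) :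
    ∃ ε₀ > (0 : ℝ), ∃ Υ : ℝ → (Fin 3 → ℝ),
      ContinuousOn Υ (Set.Ioo (-ε₀) ε₀) ∧ Υ 0 = η ∧
      (∀ ε, |ε| < ε₀ → τ (Υ ε) + ε • φ (Υ ε) = 0) ∧
      (∀ ε, |ε| < ε₀ → ε ≠ 0 →
        Function.Bijective (fderiv ℝ (fun μ => τ μ + ε • φ μ) (Υ ε))) := by
  classical
  have hτd := hτ.differentiable (by simp)
  have hφd := hφ.differentiable (by simp)
  set ψ : (Fin 3 → ℝ) → ℝ := fun μ => φ μ 1 - φ μ 0 with hψdef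
  have hψ : ContDiff ℝ (⊤ : ℕ∞) ψ := (contDiff_pi.1 hφ 1).sub (contDiff_pi.1 hφ 0)
  set F0 := fderiv ℝ (fun μ => τ μ 0) η with hF0def
  set F2 := fderiv ℝ (fun μ => τ μ 2) η with hF2def
  set Fh := fderiv ℝ ψ η with hFhdef
  set w := deriv Γ 0 with hwdef
  have hΓder : HasDerivAt Γ w 0 := ((hΓ.differentiable (by simp)) 0).hasDerivAt
  have htan : ∀ i : Fin 3, fderiv ℝ (fun μ => τ μ i) η w = 0 := by
    intro i
    have hc : HasFDerivAt (fun μ => τ μ i) (fderiv ℝ (fun μ => τ μ i) η) η :=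
      ZSL.hasF_comp τ hτ i η
    rw [← hΓ0] at hc
    have h1 : HasDerivAt (fun s => τ (Γ s) i) (fderiv ℝ (fun μ => τ μ i) η w) 0 := by
      rw [← hΓ0]
      exact hc.comp_hasDerivAt 0 hΓder
    have h2 : (fun s => τ (Γ s) i) = fun _ => (0:ℝ) := funext fun s => by
      rw [hΓz s]; rfl
    rw [h2] at h1
    simpa using h1.unique (hasDerivAt_const 0 0)
  have hw0 : F0 w = 0 := by rw [hF0def]; exact htan 0
  have hw2 : F2 w = 0 := by rw [hF2def]; exact htan 2
  have hwh : Fh w ≠ 0 := by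
    have hc : HasFDerivAt ψ Fh η := (hψ.differentiable (by simp) η).hasFDerivAt
    rw [← hΓ0] at hc
    have h1 : HasDerivAt (fun s => ψ (Γ s)) (Fh w) 0 := hc.comp_hasDerivAt 0 hΓder
    have h2 : (fun s => φ (Γ s) 1 - φ (Γ s) 0) = fun s => ψ (Γ s) := rfl
    rw [h2] at hsimple
    rw [← h1.deriv]
    exact hsimple.2
  have hker : ∀ v, F0 v = 0 → Fh v = 0 → F2 v = 0 → v = 0 := by
    intro v h0 hh h2
    set M : Fin 3 → ((Fin 3 → ℝ) →ₗ[ℝ] ℝ) := ![F0.toLinearMap, Fh.toLinearMap, F2.toLinearMap]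
      with hM
    have hpair := Fintype.linearIndependent_iff.mp hind
    have hindep : LinearIndependent ℝ M := by
      rw [Fintype.linearIndependent_iff]
      intro c hc
      have hc1 : c 1 = 0 := by
        have h := congrArg (fun L : (Fin 3 → ℝ) →ₗ[ℝ] ℝ => L w) hc
        simp [hM, Fin.sum_univ_three, hw0, hw2] at h
        rcases h with h | h
        · exact h
        · exact absurd h hwh
      have hc02 : ![c 0, c 2] 0 • (![F0, F2] : Fin 2 → (Fin 3 → ℝ) →L[ℝ] ℝ) 0
          + ![c 0, c 2] 1 • (![F0, F2] : Fin 2 → (Fin 3 → ℝ) →L[ℝ] ℝ) 1 = 0 := by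
        apply ContinuousLinearMap.ext
        intro u
        have h := congrArg (fun L : (Fin 3 → ℝ) →ₗ[ℝ] ℝ => L u) hc
        simp [hM, Fin.sum_univ_three, hc1] at h
        simpa using h
      have hg := hpair ![c 0, c 2] (by rwa [Fin.sum_univ_two])
      intro i
      fin_cases i
      · exact hg 0
      · exact hc1
      · exact hg 1
    have hcard : Fintype.card (Fin 3) = Module.finrank ℝ ((Fin 3 → ℝ) →ₗ[ℝ] ℝ) := by
      simp [Module.finrank_linearMap]
    let b := basisOfLinearIndependentOfCardEqFinrank hindep hcard
    have hb : ⇑b = M := coe_basisOfLinearIndependentOfCardEqFinrank _ _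
    funext j
    have hrepr := b.sum_repr (LinearMap.proj j : (Fin 3 → ℝ) →ₗ[ℝ] ℝ)
    have h := congrArg (fun L : (Fin 3 → ℝ) →ₗ[ℝ] ℝ => L v) hrepr
    simp [Fin.sum_univ_three, hb, hM, h0, hh, h2] at h
    simpa using h.symm
  -- the auxiliary map and inverse function theorem
  set Gm : (Fin 3 → ℝ) × ℝ → (Fin 3 → ℝ) :=
    fun p => ![τ p.1 0 + p.2 * φ p.1 0, ψ p.1, τ p.1 2 + p.2 * φ p.1 2] with hGm
  set Hm : (Fin 3 → ℝ) × ℝ → (Fin 3 → ℝ) × ℝ := fun p => (Gm p, p.2) with hHm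
  have hGc : ContDiff ℝ (⊤ : ℕ∞) Gm := by
    rw [hGm, contDiff_pi]
    intro i
    fin_cases i
    · simpa using ((contDiff_pi.1 hτ 0).comp contDiff_fst).add
        (contDiff_snd.mul ((contDiff_pi.1 hφ 0).comp contDiff_fst))
    · simpa [Function.comp_def] using hψ.comp contDiff_fst
    · simpa using ((contDiff_pi.1 hτ 2).comp contDiff_fst).add
        (contDiff_snd.mul ((contDiff_pi.1 hφ 2).comp contDiff_fst))
  have hHc : ContDiff ℝ (⊤ : ℕ∞) Hm := hGc.prodMk contDiff_snd
  set fstL := ContinuousLinearMap.fst ℝ (Fin 3 → ℝ) ℝ with hfstL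
  set sndL := ContinuousLinearMap.snd ℝ (Fin 3 → ℝ) ℝ with hsndL
  set row : Fin 3 → ((Fin 3 → ℝ) × ℝ →L[ℝ] ℝ) := ![
    F0.comp fstL + ((0:ℝ) • ((fderiv ℝ (fun μ => φ μ 0) η).comp fstL) + (φ η 0) • sndL),
    Fh.comp fstL,
    F2.comp fstL + ((0:ℝ) • ((fderiv ℝ (fun μ => φ μ 2) η).comp fstL) + (φ η 2) • sndL)]
    with hrow
  have hGA : HasFDerivAt Gm (ContinuousLinearMap.pi row) (η, 0) := by
    rw [hGm]
    apply hasFDerivAt_pi'.2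
    intro i
    have hp : ∀ i, (ContinuousLinearMap.proj i).comp (ContinuousLinearMap.pi row) = row i :=
      fun i => ContinuousLinearMap.proj_pi _ _
    rw [hp]
    fin_cases i
    · simpa [hrow, hF0def] using ZSL.hasF τ φ hτ hφ 0 η 0
    · simpa [hrow, hFhdef, hfstL, Function.comp_def] using
        ((hψ.differentiable (by simp) η).hasFDerivAt.comp ((η : Fin 3 → ℝ), (0:ℝ)) (hasFDerivAt_fst (𝕜 := ℝ) (p := ((η : Fin 3 → ℝ), (0:ℝ)))))
    · simpa [hrow, hF2def] using ZSL.hasF τ φ hτ hφ 2 η 0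
  set Am := (ContinuousLinearMap.pi row).prod sndL with hAm
  have hHA : HasFDerivAt Hm Am (η, 0) := by
    rw [hHm, hAm]
    exact hGA.prodMk hasFDerivAt_snd
  have hAker : ∀ z : (Fin 3 → ℝ) × ℝ, Am z = 0 → z = 0 := by
    rintro ⟨v, t⟩ hz
    have ht : t = 0 := congrArg Prod.snd hz
    subst ht
    have h0 := congrFun (congrArg Prod.fst hz) 0
    have h1 := congrFun (congrArg Prod.fst hz) 1
    have h2 := congrFun (congrArg Prod.fst hz) 2
    simp [hAm, hrow, hfstL, hsndL] at h0 h1 h2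
    have hv : v = 0 := hker v h0 h1 h2
    simp [hv]
  have hAinj : Function.Injective Am := by
    intro a b hab
    have h := hAker (a - b) (by rw [map_sub, hab, sub_self])
    exact sub_eq_zero.mp h
  have hAsurj : Function.Surjective Am := by
    have h := LinearMap.injective_iff_surjective (f := Am.toLinearMap)
    exact h.mp hAinj
  set eqA := LinearEquiv.ofBijective Am.toLinearMap ⟨hAinj, hAsurj⟩ with heqA
  set eqAc := eqA.toContinuousLinearEquiv with heqAc
  have heqc : (eqAc : ((Fin 3 → ℝ) × ℝ) →L[ℝ] ((Fin 3 → ℝ) × ℝ)) = Am := by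
    apply ContinuousLinearMap.ext
    intro z
    rfl
  have hstrict : HasStrictFDerivAt Hm
      (eqAc : ((Fin 3 → ℝ) × ℝ) →L[ℝ] ((Fin 3 → ℝ) × ℝ)) (η, 0) := by
    have h1 : HasStrictFDerivAt Hm (fderiv ℝ Hm (η, 0)) (η, 0) :=
      hHc.contDiffAt.hasStrictFDerivAt (by simp)
    rwa [hHA.fderiv, ← heqc] at h1
  set P := hstrict.toOpenPartialHomeomorph Hm with hP
  have hPcoe : ⇑P = Hm := hstrict.toOpenPartialHomeomorph_coe
  have hsrc : ((η : Fin 3 → ℝ), (0:ℝ)) ∈ P.source := hstrict.mem_toOpenPartialHomeomorph_source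
  have hH0 : Hm ((η : Fin 3 → ℝ), (0:ℝ)) = (0, 0) := by
    rw [hHm]
    simp only [Prod.mk.injEq]
    refine ⟨?_, trivial⟩
    rw [hGm]
    funext i
    have hη0 : ∀ i : Fin 3, τ η i = 0 := fun i => by rw [hη]; rfl
    have hψη : ψ η = 0 := by
      have h2 : (fun s => φ (Γ s) 1 - φ (Γ s) 0) = fun s => ψ (Γ s) := rfl
      have := hsimple.1
      rw [h2] at this
      simpa [hΓ0] using this
    fin_cases i <;> simp [hη0, hψη]
  have htgt : (((0 : Fin 3 → ℝ), (0:ℝ))) ∈ P.target := by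
    rw [← hH0, ← hPcoe]
    exact P.map_source hsrc
  obtain ⟨δ, hδpos, hball⟩ := Metric.isOpen_iff.mp P.open_target _ htgt
  have hmem : ∀ ε : ℝ, |ε| < δ → (((0:Fin 3 → ℝ), ε)) ∈ P.target := by
    intro ε hε
    apply hball
    rw [Metric.mem_ball]
    have hd : dist (((0:Fin 3 → ℝ), ε)) (((0:Fin 3 → ℝ), (0:ℝ))) = |ε| := by
      rw [Prod.dist_eq]
      simp [Real.dist_eq]
    rw [hd]
    exact hε
  set Υ : ℝ → (Fin 3 → ℝ) := fun ε => (P.symm ((0:Fin 3 → ℝ), ε)).1 with hΥdef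
  have hΥ0 : Υ 0 = η := by
    rw [hΥdef]
    simp only
    have h : P.symm ((0:Fin 3 → ℝ), (0:ℝ)) = ((η : Fin 3 → ℝ), (0:ℝ)) := by
      rw [← hH0, ← hPcoe]
      exact P.left_inv hsrc
    rw [h]
  have hsnd : ∀ ε, |ε| < δ → (P.symm ((0:Fin 3 → ℝ), ε)).2 = ε
      ∧ Gm (P.symm ((0:Fin 3 → ℝ), ε)) = 0 := by
    intro ε hε
    have h1 : Hm (P.symm ((0:Fin 3 → ℝ), ε)) = ((0:Fin 3 → ℝ), ε) := by
      rw [← hPcoe]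
      exact P.right_inv (hmem ε hε)
    rw [hHm] at h1
    exact ⟨congrArg Prod.snd h1, congrArg Prod.fst h1⟩
  have hcomp : ∀ ε, |ε| < δ → τ (Υ ε) 0 + ε * φ (Υ ε) 0 = 0 ∧ φ (Υ ε) 1 - φ (Υ ε) 0 = 0
      ∧ τ (Υ ε) 2 + ε * φ (Υ ε) 2 = 0 := by
    intro ε hε
    obtain ⟨h2, h1⟩ := hsnd ε hε
    rw [hGm] at h1
    have e0 := congrFun h1 0
    have e1 := congrFun h1 1
    have e2 := congrFun h1 2
    simp only [Matrix.cons_val_zero, Matrix.cons_val_one, Matrix.head_cons, Pi.zero_apply,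
      Matrix.cons_val_two, Matrix.tail_cons] at e0 e1 e2
    rw [h2] at e0 e2
    exact ⟨e0, e1, e2⟩
  have hΥcont : ContinuousOn Υ (Set.Ioo (-δ) δ) := by
    rw [hΥdef]
    apply continuous_fst.comp_continuousOn
    apply P.continuousOn_symm.comp
    · exact (continuous_const.prodMk continuous_id).continuousOn
    · intro ε hε
      exact hmem ε (by rw [abs_lt]; exact ⟨hε.1, hε.2⟩)
  have hΥcontAt : ContinuousAt Υ 0 :=
    hΥcont.continuousAt (Ioo_mem_nhds (by linarith) hδpos)
  -- gradients and determinant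
  have hgrad : ∀ (f : (Fin 3 → ℝ) → (Fin 3 → ℝ)), ContDiff ℝ (⊤ : ℕ∞) f → ∀ (i : Fin 3)
      (x v : Fin 3 → ℝ),
      fderiv ℝ (fun μ => f μ i) x v = ∑ j, fderiv ℝ f x (Pi.single j 1) i * v j :=
    fun f hf i x v => by rw [ZSL.comp_fderiv_apply f hf x v i, ZSL.grad_expand]
  set gT : Fin 3 → (Fin 3 → ℝ) → (Fin 3 → ℝ) :=
    fun i x j => fderiv ℝ τ x (Pi.single j 1) i with hgT
  set gP : Fin 3 → (Fin 3 → ℝ) → (Fin 3 → ℝ) :=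
    fun i x j => fderiv ℝ φ x (Pi.single j 1) i with hgP
  set N : ℝ → (Fin 3 → ℝ) → Matrix (Fin 3) (Fin 3) ℝ :=
    fun ε x => Matrix.of ![gT 0 x + ε • gP 0 x, gP 1 x - gP 0 x, gT 2 x + ε • gP 2 x] with hN
  have hFh_split : ∀ v, Fh v = fderiv ℝ (fun μ => φ μ 1) η v - fderiv ℝ (fun μ => φ μ 0) η v := by
    intro v
    have h : Fh = fderiv ℝ (fun μ => φ μ 1) η - fderiv ℝ (fun μ => φ μ 0) η := by
      rw [hFhdef, hψdef]
      exact ((ZSL.hasF_comp φ hφ 1 η).sub (ZSL.hasF_comp φ hφ 0 η)).fderiv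
    rw [h]
    rfl
  have hdet0 : (N 0 η).det ≠ 0 := by
    have hk : ∀ v, (N 0 η).mulVec v = 0 → v = 0 := by
      intro v hv
      have e0 := congrFun hv 0
      have e1 := congrFun hv 1
      have e2 := congrFun hv 2
      simp only [hN, Matrix.mulVec, dotProduct, Matrix.of_apply, Matrix.cons_val_zero,
        Matrix.cons_val_one, Matrix.head_cons, Matrix.cons_val_two, Matrix.tail_cons,
        Pi.add_apply, Pi.sub_apply, Pi.smul_apply, zero_smul, add_zero, smul_eq_mul, zero_mul,
        Pi.zero_apply, sub_mul] at e0 e1 e2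
      apply hker v
      · rw [hF0def, hgrad τ hτ 0 η v]
        exact e0
      · rw [hFh_split v, hgrad φ hφ 1 η v, hgrad φ hφ 0 η v]
        rw [← Finset.sum_sub_distrib]
        exact e1
      · rw [hF2def, hgrad τ hτ 2 η v]
        exact e2
    have hinj : Function.Injective (N 0 η).mulVec := by
      intro a b hab
      have h := hk (a - b) (by rw [Matrix.mulVec_sub, hab, sub_self])
      exact sub_eq_zero.mp h
    have hunit : IsUnit (N 0 η) := Matrix.mulVec_injective_iff_isUnit.mp hinj
    exact isUnit_iff_ne_zero.mp ((Matrix.isUnit_iff_isUnit_det _).mp hunit)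
  set d : ℝ → ℝ := fun ε => (N ε (Υ ε)).det with hd
  have hdcont : ContinuousAt d 0 := by
    have hNcont : ContinuousAt (fun ε => N ε (Υ ε)) 0 := by
      apply continuousAt_pi.2
      intro i
      apply continuousAt_pi.2
      intro j
      have hT : ∀ i : Fin 3, ContinuousAt (fun ε => gT i (Υ ε) j) 0 := fun i =>
        ((ZSL.cont_fderiv_apply τ hτ (Pi.single j 1) i).continuousAt).comp hΥcontAt
      have hPc : ∀ i : Fin 3, ContinuousAt (fun ε => gP i (Υ ε) j) 0 := fun i =>
        ((ZSL.cont_fderiv_apply φ hφ (Pi.single j 1) i).continuousAt).comp hΥcontAt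
      fin_cases i
      · simpa [hN, Pi.add_def, Pi.mul_def] using (hT 0).add (continuousAt_id.mul (hPc 0))
      · simpa [hN, Pi.sub_def] using (hPc 1).sub (hPc 0)
      · simpa [hN, Pi.add_def, Pi.mul_def] using (hT 2).add (continuousAt_id.mul (hPc 2))
    have hdet : Continuous fun M : Matrix (Fin 3) (Fin 3) ℝ => M.det :=
      Continuous.matrix_det continuous_id
    exact hdet.continuousAt.comp hNcont
  have hd0 : d 0 ≠ 0 := by
    rw [hd]
    simpa [hΥ0] using hdet0
  obtain ⟨δ₂, hδ₂pos, hδ₂⟩ := Metric.eventually_nhds_iff.mp (hdcont.eventually_ne hd0)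
  refine ⟨min δ δ₂, lt_min hδpos hδ₂pos, Υ, ?_, hΥ0, ?_, ?_⟩
  · exact hΥcont.mono (Set.Ioo_subset_Ioo (neg_le_neg (min_le_left _ _)) (min_le_left _ _))
  · intro ε hε
    have hε' : |ε| < δ := lt_of_lt_of_le hε (min_le_left _ _)
    obtain ⟨c0, c1, c2⟩ := hcomp ε hε'
    funext i
    have hs := hsym (Υ ε)
    have hφ1 : φ (Υ ε) 1 = φ (Υ ε) 0 := by linarith
    fin_cases i
    · simpa using c0
    · simp only [Pi.add_apply, Pi.smul_apply, smul_eq_mul, Pi.zero_apply]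
      show τ (Υ ε) 1 + ε * φ (Υ ε) 1 = 0
      rw [← hs, hφ1]
      exact c0
    · simpa using c2
  · intro ε hε hε0
    have hε' : |ε| < δ := lt_of_lt_of_le hε (min_le_left _ _)
    have hD : HasFDerivAt (fun μ => τ μ + ε • φ μ) (fderiv ℝ τ (Υ ε) + ε • fderiv ℝ φ (Υ ε))
        (Υ ε) := ((hτd (Υ ε)).hasFDerivAt.add ((hφd (Υ ε)).hasFDerivAt.const_smul ε))
    set J : Matrix (Fin 3) (Fin 3) ℝ := Matrix.of ![gT 0 (Υ ε) + ε • gP 0 (Υ ε),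
      gT 1 (Υ ε) + ε • gP 1 (Υ ε), gT 2 (Υ ε) + ε • gP 2 (Υ ε)] with hJ
    have hDcoe : ⇑(fderiv ℝ (fun μ => τ μ + ε • φ μ) (Υ ε)) = J.mulVec := by
      funext v
      rw [hD.fderiv]
      funext i
      have hτi : fderiv ℝ τ (Υ ε) v i = ∑ j, gT i (Υ ε) j * v j := by
        rw [← hgrad τ hτ i (Υ ε) v, ZSL.comp_fderiv_apply τ hτ (Υ ε) v i]
      have hφi : fderiv ℝ φ (Υ ε) v i = ∑ j, gP i (Υ ε) j * v j := by
        rw [← hgrad φ hφ i (Υ ε) v, ZSL.comp_fderiv_apply φ hφ (Υ ε) v i]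
      have hJv : J.mulVec v i = ∑ j, (gT i (Υ ε) j + ε * gP i (Υ ε) j) * v j := by
        fin_cases i <;>
          simp [hJ, Matrix.mulVec, dotProduct, smul_eq_mul]
      rw [hJv]
      simp only [ContinuousLinearMap.add_apply, ContinuousLinearMap.coe_smul', Pi.smul_apply,
        Pi.add_apply, smul_eq_mul]
      rw [hτi, hφi, Finset.mul_sum, ← Finset.sum_add_distrib]
      refine Finset.sum_congr rfl fun j _ => by ring
    have hgT10 : gT 1 (Υ ε) = gT 0 (Υ ε) := by
      funext j
      rw [hgT]
      simp only
      rw [← ZSL.comp_fderiv_apply τ hτ (Υ ε) (Pi.single j 1) 1,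
        ← ZSL.comp_fderiv_apply τ hτ (Υ ε) (Pi.single j 1) 0]
      have hτ10 : (fun μ => τ μ 1) = (fun μ => τ μ 0) := funext fun μ => (hsym μ).symm
      rw [hτ10]
    have hJdet : J.det = ε * (N ε (Υ ε)).det := by
      have hJeq : J = ((N ε (Υ ε)).updateRow 1 ((N ε (Υ ε)) 0 + ε • ((N ε (Υ ε)) 1))) := by
        funext i j
        fin_cases i
        · show J 0 j = ((N ε (Υ ε)).updateRow 1 ((N ε (Υ ε)) 0 + ε • ((N ε (Υ ε)) 1))) 0 j
          rw [Matrix.updateRow_ne (show (0:Fin 3) ≠ 1 by decide)]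
          simp [hJ, hN]
        · show J 1 j = ((N ε (Υ ε)).updateRow 1 ((N ε (Υ ε)) 0 + ε • ((N ε (Υ ε)) 1))) 1 j
          rw [Matrix.updateRow_self]
          simp only [hJ, hN, Matrix.of_apply, Matrix.cons_val_zero, Matrix.cons_val_one,
            Matrix.head_cons, Pi.add_apply, Pi.smul_apply, Pi.sub_apply, smul_eq_mul, hgT10]
          ring
        · show J 2 j = ((N ε (Υ ε)).updateRow 1 ((N ε (Υ ε)) 0 + ε • ((N ε (Υ ε)) 1))) 2 j
          rw [Matrix.updateRow_ne (show (2:Fin 3) ≠ 1 by decide)]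
          simp [hJ, hN]
      rw [hJeq]
      rw [Matrix.det_updateRow_add]
      rw [Matrix.det_updateRow_smul]
      rw [Matrix.updateRow_eq_self]
      have h1 : (((N ε (Υ ε)).updateRow 1 ((N ε (Υ ε)) 0))).det = 0 :=
        Matrix.det_zero_of_row_eq (show (0:Fin 3) ≠ 1 by decide)
          (by simp [Matrix.updateRow_self, Matrix.updateRow_ne])
      rw [h1, zero_add]
    have hdne : (N ε (Υ ε)).det ≠ 0 := by
      have hlt : dist ε 0 < δ₂ := by
        rw [Real.dist_eq, sub_zero]
        exact lt_of_lt_of_le hε (min_le_right _ _)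
      exact hδ₂ hlt
    have hdetJ : J.det ≠ 0 := by
      rw [hJdet]
      exact mul_ne_zero hε0 hdne
    have hunit : IsUnit J := (Matrix.isUnit_iff_isUnit_det _).mpr (isUnit_iff_ne_zero.mpr hdetJ)
    have hbij : Function.Bijective J.mulVec :=
      ⟨Matrix.mulVec_injective_iff_isUnit.mpr hunit,
        Matrix.mulVec_surjective_iff_isUnit.mpr hunit⟩
    rw [← hDcoe] at hbij
    exact hbij
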